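/- Let K be an algebraically closed field and F = K(x). Let S be a finite-dimensional K-subspace of F of dimension n ≥ 2, let v be one of the valuations v_α (α ∈ K) or v_∞, and let S_1 ⊂ … ⊂ S_n be the natural filtration of S with respect to v, with combinatorial genii γ_i. Set δ := max over 1 ≤ i ≤ n−1 of (γ_{i+1} − γ_i), and suppose δ + 2 ≤ n. Then K(S) = K(S_{δ+2}). -/

import Mathlib

/-!
Let `u` be the basis vector with `S_{i+1} = S_i + K u`; every nonzero element of `S_i` has
valuation greater than `v(u)`. If `u ∉ K(S_i)`, the spaces `S_i²`, `u S_i` and `K u²` are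
independent inside `S_{i+1}²`: a nonzero `u s ∈ S_i²` would give `u ∈ K(S_i)`, and
`v(u²) = 2 v(u)` is smaller than every valuation met in `S_i² + u S_i`. Hence
`dim S_{i+1}² ≥ dim S_i² + i + 1`, i.e. `γ_{i+1} - γ_i ≥ i - 1`, which exceeds `δ` as soon
as `i ≥ δ + 2`. So each basis vector beyond `S_{δ+2}` already lies in `K(S_{δ+2})`.
-/

open Polynomial

noncomputable section

namespace FFF

variable {K : Type*} [Field K] [IsAlgClosed K]

/-- Valuation of a rational function at the finite place `x - α`
(order of vanishing at `x - α`). -/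
def vA (α : K) (f : RatFunc K) : ℤ :=
  (Polynomial.rootMultiplicity α f.num : ℤ) - (Polynomial.rootMultiplicity α f.denom : ℤ)

/-- Valuation of a rational function at the place at infinity:
`deg (denominator) - deg (numerator)`. -/
def vInf (f : RatFunc K) : ℤ := -f.intDegree

/-- The places of `K(x)`: `some α` is the finite place at `α ∈ K`, `none` is the
place at infinity; `plval p` is the associated valuation. -/
def plval (p : Option K) (f : RatFunc K) : ℤ :=
  Option.elim p (vInf f) (fun α => vA α f)

/-- The degree of a rational function, `deg f = -v∞(f)`. -/
def fdeg (f : RatFunc K) : ℤ := f.intDegree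

/-- A divisor on `K(x)`: an integer for every place, zero for all but finitely many. -/
abbrev Divisor (K : Type*) [Field K] := Option K →₀ ℤ

/-- The degree of a divisor: the sum of its values. -/
def divDeg (D : Divisor K) : ℤ := D.sum fun _ n => n

/-- The Riemann–Roch space `L(D)` of a divisor `D`. -/
def RRset (D : Divisor K) : Set (RatFunc K) :=
  {f | f = 0 ∨ ∀ p : Option K, -(D p) ≤ plval p f}

/-- The subfield `K(T)` of `K(x)` generated by the constants `K` and a set `T`. -/
def Kgen (T : Set (RatFunc K)) : Subfield (RatFunc K) :=
  Subfield.closure ((Set.range fun a : K => (RatFunc.C a : RatFunc K)) ∪ T)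

/-- The combinatorial genus `γ = dim S² - 2 dim S + 1` of a subspace `S`. -/
def cgenus (S : Submodule K (RatFunc K)) : ℤ :=
  (Module.finrank K ↥(S * S) : ℤ) - 2 * (Module.finrank K ↥S : ℤ) + 1

/-- `sfil e i` is the `i`-th step (1-indexed) of the natural filtration attached to a
filtered basis `e`: the span of the first `i` basis vectors. -/
def sfil {n : ℕ} (e : Fin n → RatFunc K) (i : ℕ) : Submodule K (RatFunc K) :=
  Submodule.span K (e '' {j | (j : ℕ) < i})

/-- `e` is a filtered basis of `S` with respect to the valuation `v`:
a basis of `S` with strictly decreasing valuations. -/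
def IsFilteredBasis {n : ℕ} (v : RatFunc K → ℤ) (S : Submodule K (RatFunc K))
    (e : Fin n → RatFunc K) : Prop :=
  LinearIndependent K e ∧ Submodule.span K (Set.range e) = S ∧
    StrictAnti fun i => v (e i)

/-- `D` is the divisor of least degree with `S ⊆ L(D)`, i.e.
`D(P) = -min {v_P s : s ∈ S, s ≠ 0}` for every place `P`. -/
def IsMinDivisor (S : Submodule K (RatFunc K)) (D : Divisor K) : Prop :=
  ∀ p : Option K, IsLeast {d : ℤ | ∃ s ∈ S, s ≠ 0 ∧ plval p s = d} (-(D p))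

instance finite_submodule_mul {R A : Type*} [CommSemiring R] [Semiring A] [Algebra R A]
    (M N : Submodule R A) [Module.Finite R M] [Module.Finite R N] : Module.Finite R ↥(M * N) :=
  Module.Finite.iff_fg.mpr ((Module.Finite.iff_fg.mp ‹_›).mul (Module.Finite.iff_fg.mp ‹_›))

theorem mul_self_inf_span_singleton_mul_eq_bot {F L : Type*} [Field F] [Field L] [Algebra F L]
    {V : Submodule F L} {u : L} (hu : u ∉ Subfield.closure (V : Set L)) :
    V * V ⊓ Submodule.span F {u} * V = ⊥ := by
  refine (Submodule.eq_bot_iff _).mpr ?_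
  rintro _ ⟨hsq, hus⟩
  obtain ⟨s, hs, rfl⟩ := Submodule.mem_span_singleton_mul.mp hus
  have hclosure : ∀ x ∈ V * V, x ∈ Subfield.closure (V : Set L) := fun x hx =>
    Submodule.mul_induction_on hx
      (fun a ha b hb => mul_mem (Subfield.subset_closure ha) (Subfield.subset_closure hb))
      (fun _ _ => add_mem)
  by_contra hus0
  have hs0 : s ≠ 0 := right_ne_zero_of_mul hus0
  apply hu
  rw [show u = u * s * s⁻¹ by field_simp]
  exact mul_mem (hclosure _ hsq) (inv_mem (Subfield.subset_closure hs))

section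

omit [IsAlgClosed K]

open Module

theorem vA_algebraMap_div (α : K) {a b : K[X]} (ha : a ≠ 0) (hb : b ≠ 0) :
    vA α (algebraMap K[X] (RatFunc K) a / algebraMap K[X] (RatFunc K) b) =
      (rootMultiplicity α a : ℤ) - rootMultiplicity α b := by
  set f := algebraMap K[X] (RatFunc K) a / algebraMap K[X] (RatFunc K) b
  have hf : f ≠ 0 :=
    div_ne_zero (RatFunc.algebraMap_ne_zero ha) (RatFunc.algebraMap_ne_zero hb)
  have hcross : f.num * b = a * f.denom := by
    apply RatFunc.algebraMap_injective K
    rw [map_mul, map_mul, ← div_eq_div_iff (RatFunc.algebraMap_ne_zero f.denom_ne_zero)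
      (RatFunc.algebraMap_ne_zero hb), RatFunc.num_div_denom]
  have hmult := congrArg (rootMultiplicity α) hcross
  rw [rootMultiplicity_mul (mul_ne_zero (RatFunc.num_ne_zero hf) hb),
    rootMultiplicity_mul (mul_ne_zero ha f.denom_ne_zero)] at hmult
  unfold vA
  omega

theorem vA_mul (α : K) {f g : RatFunc K} (hf : f ≠ 0) (hg : g ≠ 0) :
    vA α (f * g) = vA α f + vA α g := by
  have hnum := mul_ne_zero (RatFunc.num_ne_zero hf) (RatFunc.num_ne_zero hg)
  have hden := mul_ne_zero f.denom_ne_zero g.denom_ne_zero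
  have hfg : f * g = algebraMap K[X] (RatFunc K) (f.num * g.num) /
      algebraMap K[X] (RatFunc K) (f.denom * g.denom) := by
    rw [map_mul, map_mul, ← div_mul_div_comm, RatFunc.num_div_denom, RatFunc.num_div_denom]
  rw [hfg, vA_algebraMap_div α hnum hden, rootMultiplicity_mul hnum, rootMultiplicity_mul hden]
  unfold vA
  push_cast
  ring

theorem min_le_vA_add (α : K) {f g : RatFunc K} (hf : f ≠ 0) (hg : g ≠ 0) (hfg : f + g ≠ 0) :
    min (vA α f) (vA α g) ≤ vA α (f + g) := by
  have hdf := f.denom_ne_zero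
  have hdg := g.denom_ne_zero
  have hsum : f + g = algebraMap K[X] (RatFunc K) (f.num * g.denom + f.denom * g.num) /
      algebraMap K[X] (RatFunc K) (f.denom * g.denom) := by
    conv_lhs => rw [← RatFunc.num_div_denom f, ← RatFunc.num_div_denom g]
    rw [div_add_div _ _ (RatFunc.algebraMap_ne_zero hdf) (RatFunc.algebraMap_ne_zero hdg),
      map_add, map_mul, map_mul, map_mul]
  have hnum : f.num * g.denom + f.denom * g.num ≠ 0 := by
    rintro h0
    rw [h0, map_zero, zero_div] at hsum
    exact hfg hsum
  have hmin := rootMultiplicity_add (p := f.num * g.denom) (q := f.denom * g.num) α hnum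
  rw [rootMultiplicity_mul (mul_ne_zero (RatFunc.num_ne_zero hf) hdg),
    rootMultiplicity_mul (mul_ne_zero hdf (RatFunc.num_ne_zero hg))] at hmin
  rw [hsum, vA_algebraMap_div α hnum (mul_ne_zero hdf hdg),
    rootMultiplicity_mul (mul_ne_zero hdf hdg)]
  unfold vA
  omega

theorem plval_mul (p : Option K) {f g : RatFunc K} (hf : f ≠ 0) (hg : g ≠ 0) :
    plval p (f * g) = plval p f + plval p g := by
  cases p with
  | none =>
    simp only [plval, Option.elim, vInf, RatFunc.intDegree_mul hf hg]
    ring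
  | some α => exact vA_mul α hf hg

theorem min_le_plval_add (p : Option K) {f g : RatFunc K} (hf : f ≠ 0) (hg : g ≠ 0)
    (hfg : f + g ≠ 0) : min (plval p f) (plval p g) ≤ plval p (f + g) := by
  cases p with
  | none =>
    have := RatFunc.intDegree_add_le hg hfg
    simp only [plval, Option.elim, vInf]
    omega
  | some α => exact min_le_vA_add α hf hg hfg

theorem plval_C (p : Option K) (c : K) : plval p (RatFunc.C c) = 0 := by
  cases p with
  | none => simp [plval, vInf]
  | some α =>
    simp only [plval, Option.elim, vA, RatFunc.num_C, RatFunc.denom_C, rootMultiplicity_C]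
    rw [← Polynomial.C_1, rootMultiplicity_C, Nat.cast_zero, sub_zero]

theorem plval_smul (p : Option K) {c : K} {f : RatFunc K} (hc : c ≠ 0) (hf : f ≠ 0) :
    plval p (c • f) = plval p f := by
  rw [RatFunc.smul_eq_C_mul, plval_mul p ((_root_.map_ne_zero _).mpr hc) hf, plval_C, zero_add]

def plvalGeSubmodule (p : Option K) (c : ℤ) : Submodule K (RatFunc K) where
  carrier := {f | f = 0 ∨ c ≤ plval p f}
  zero_mem' := Or.inl rfl
  add_mem' := by
    intro f g hf hg
    by_cases hf0 : f = 0
    · simpa [hf0] using hg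
    by_cases hg0 : g = 0
    · simpa [hg0] using hf
    by_cases hfg : f + g = 0
    · exact Or.inl hfg
    have := min_le_plval_add p hf0 hg0 hfg
    have := hf.resolve_left hf0
    have := hg.resolve_left hg0
    exact Or.inr (by omega)
  smul_mem' := by
    rintro c f (rfl | hf)
    · simp
    by_cases hc : c = 0
    · simp [hc]
    by_cases hf0 : f = 0
    · simp [hf0]
    exact Or.inr (by rwa [plval_smul p hc hf0])

theorem mem_plvalGeSubmodule {p : Option K} {c : ℤ} {f : RatFunc K} :
    f ∈ plvalGeSubmodule p c ↔ f = 0 ∨ c ≤ plval p f :=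
  Iff.rfl

theorem plvalGeSubmodule_anti (p : Option K) {c d : ℤ} (h : c ≤ d) :
    plvalGeSubmodule p d ≤ plvalGeSubmodule p c := by
  rintro f (hf | hf)
  · exact Or.inl hf
  · exact Or.inr (h.trans hf)

theorem plvalGeSubmodule_mul_le (p : Option K) (c d : ℤ) :
    plvalGeSubmodule p c * plvalGeSubmodule p d ≤ plvalGeSubmodule p (c + d) := by
  refine Submodule.mul_le.mpr fun f hf g hg => ?_
  by_cases hf0 : f = 0
  · simp [hf0]
  by_cases hg0 : g = 0
  · simp [hg0]
  have hcf := (mem_plvalGeSubmodule.mp hf).resolve_left hf0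
  have hdg := (mem_plvalGeSubmodule.mp hg).resolve_left hg0
  exact Or.inr (by rw [plval_mul p hf0 hg0]; omega)

theorem span_singleton_le_plvalGeSubmodule (p : Option K) (f : RatFunc K) :
    K ∙ f ≤ plvalGeSubmodule p (plval p f) :=
  (Submodule.span_singleton_le_iff_mem _ _).mpr (Or.inr le_rfl)

theorem span_singleton_inf_plvalGeSubmodule_eq_bot {p : Option K} {c : ℤ} {f : RatFunc K}
    (hf : f ≠ 0) (hfc : plval p f < c) : (K ∙ f) ⊓ plvalGeSubmodule p c = ⊥ := by
  refine (Submodule.eq_bot_iff _).mpr ?_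
  rintro g ⟨hg, hgc⟩
  obtain ⟨a, rfl⟩ := Submodule.mem_span_singleton.mp hg
  by_contra hag
  have ha : a ≠ 0 := by rintro rfl; simp at hag
  have := (mem_plvalGeSubmodule.mp hgc).resolve_left hag
  rw [plval_smul p ha hf] at this
  omega

theorem finrank_mul_self_add_finrank_add_one_le {p : Option K} {c : ℤ}
    {V : Submodule K (RatFunc K)} [FiniteDimensional K V] {u : RatFunc K}
    (hV : V ≤ plvalGeSubmodule p c) (hu : plval p u < c)
    (hcl : u ∉ Subfield.closure (V : Set (RatFunc K))) :
    finrank K ↥(V * V) + finrank K V + 1 ≤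
      finrank K ↥((V ⊔ K ∙ u) * (V ⊔ K ∙ u)) := by
  have hu0 : u ≠ 0 := fun h => hcl (h ▸ zero_mem _)
  have huu : u * u ≠ 0 := mul_ne_zero hu0 hu0
  set B := (K ∙ u) * V with hB_def
  have hB : finrank K B = finrank K V := by
    have hmap : B = V.map (LinearMap.mulLeft K u) := by
      rw [hB_def, Submodule.mul_eq_map₂, Submodule.map₂_span_singleton_eq_map]
      rfl
    rw [hmap]
    exact (Submodule.equivMapOfInjective _ (mul_right_injective₀ hu0) V).symm.finrank_eq
  have hval : V * V ⊔ B ≤ plvalGeSubmodule p (plval p u + c) := sup_le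
    ((mul_le_mul' hV hV).trans ((plvalGeSubmodule_mul_le p c c).trans
      (plvalGeSubmodule_anti p (by omega))))
    ((mul_le_mul' (span_singleton_le_plvalGeSubmodule p u) hV).trans
      (plvalGeSubmodule_mul_le p _ c))
  have hsq : (V * V ⊔ B) ⊓ (K ∙ (u * u)) = ⊥ := by
    rw [inf_comm]
    refine eq_bot_mono (inf_le_inf_left _ hval) (span_singleton_inf_plvalGeSubmodule_eq_bot huu ?_)
    rw [plval_mul p hu0 hu0]
    omega
  have hle : V * V ⊔ B ⊔ (K ∙ (u * u)) ≤ (V ⊔ K ∙ u) * (V ⊔ K ∙ u) := by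
    refine sup_le (sup_le (mul_le_mul' le_sup_left le_sup_left)
      (mul_le_mul' le_sup_right le_sup_left)) ?_
    have hu' : u ∈ V ⊔ K ∙ u := Submodule.mem_sup_right (Submodule.mem_span_singleton_self u)
    exact (Submodule.span_singleton_le_iff_mem _ _).mpr (Submodule.mul_mem_mul hu' hu')
  calc finrank K ↥(V * V) + finrank K V + 1 = finrank K ↥(V * V ⊔ B ⊔ (K ∙ (u * u))) := by
        have h₁ := Submodule.finrank_sup_add_finrank_inf_eq (V * V) B
        have h₂ := Submodule.finrank_sup_add_finrank_inf_eq (V * V ⊔ B) (K ∙ (u * u))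
        rw [mul_self_inf_span_singleton_mul_eq_bot hcl, finrank_bot] at h₁
        rw [hsq, finrank_bot, finrank_span_singleton huu] at h₂
        omega
    _ ≤ _ := Submodule.finrank_mono hle

section Filtration

variable {n : ℕ} {e : Fin n → RatFunc K}

instance (e : Fin n → RatFunc K) (i : ℕ) : FiniteDimensional K (sfil e i) :=
  FiniteDimensional.span_of_finite K ((Set.toFinite _).image e)

theorem sfil_le_span_range (e : Fin n → RatFunc K) (i : ℕ) :
    sfil e i ≤ Submodule.span K (Set.range e) :=
  Submodule.span_mono (Set.image_subset_range _ _)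

theorem sfil_eq_span_range (e : Fin n → RatFunc K) :
    sfil e n = Submodule.span K (Set.range e) := by
  rw [sfil, ← Set.image_univ]
  congr
  exact Set.eq_univ_of_forall Fin.is_lt

theorem finrank_sfil (hli : LinearIndependent K e) {i : ℕ} (hi : i ≤ n) :
    finrank K (sfil e i) = i := by
  have hrange : e '' {j : Fin n | (j : ℕ) < i} = Set.range (e ∘ Fin.castLE hi) := by
    ext x
    constructor
    · rintro ⟨j, hj, rfl⟩
      exact ⟨⟨j, hj⟩, rfl⟩
    · rintro ⟨k, rfl⟩
      exact ⟨Fin.castLE hi k, k.isLt, rfl⟩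
  rw [sfil, hrange, finrank_span_eq_card (hli.comp _ (Fin.castLE_injective hi)),
    Fintype.card_fin]

theorem sfil_succ (e : Fin n → RatFunc K) {i : ℕ} (hi : i < n) :
    sfil e (i + 1) = sfil e i ⊔ K ∙ e ⟨i, hi⟩ := by
  have hset : {j : Fin n | (j : ℕ) < i + 1} = {j : Fin n | (j : ℕ) < i} ∪ {⟨i, hi⟩} := by
    ext j
    simp only [Set.mem_ofPred_eq, Set.mem_union, Set.mem_singleton_iff, Fin.ext_iff]
    omega
  unfold sfil
  rw [hset, Set.image_union, Set.image_singleton, Submodule.span_union]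

theorem sfil_le_plvalGeSubmodule {p : Option K} (hanti : StrictAnti fun j => plval p (e j))
    {i : ℕ} (hi : i < n) : sfil e i ≤ plvalGeSubmodule p (plval p (e ⟨i, hi⟩) + 1) := by
  refine Submodule.span_le.mpr ?_
  rintro _ ⟨j, hj, rfl⟩
  exact Or.inr (hanti (show j < ⟨i, hi⟩ from hj))

theorem sub_one_le_cgenus_sfil_succ_sub {p : Option K} (hli : LinearIndependent K e)
    (hanti : StrictAnti fun j => plval p (e j)) {i : ℕ} (hi : i < n)
    (he : e ⟨i, hi⟩ ∉ Subfield.closure (sfil e i : Set (RatFunc K))) :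
    (i : ℤ) - 1 ≤ cgenus (sfil e (i + 1)) - cgenus (sfil e i) := by
  have hsq := finrank_mul_self_add_finrank_add_one_le
    (sfil_le_plvalGeSubmodule hanti hi) (lt_add_one _) he
  rw [← sfil_succ e hi, finrank_sfil hli hi.le] at hsq
  unfold cgenus
  rw [finrank_sfil hli hi.le, finrank_sfil hli hi]
  push_cast
  omega

end Filtration

theorem Kgen_eq_adjoin (T : Set (RatFunc K)) :
    Kgen T = (IntermediateField.adjoin K T).toSubfield := by
  rw [IntermediateField.adjoin_toSubfield, RatFunc.algebraMap_eq_C]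
  rfl

end

theorem statement4_general (n : ℕ) (S : Submodule K (RatFunc K))
    (p : Option K) (e : Fin n → RatFunc K)
    (hbasis : IsFilteredBasis (plval p) S e)
    (δ : ℕ)
    (hδ : IsGreatest
      {d : ℤ | ∃ i : ℕ, 1 ≤ i ∧ i ≤ n - 1 ∧
        d = cgenus (sfil e (i + 1)) - cgenus (sfil e i)} (δ : ℤ))
    (hδn : δ + 2 ≤ n) :
    Kgen (S : Set (RatFunc K)) = Kgen ((sfil e (δ + 2) : Submodule K (RatFunc K)) : Set (RatFunc K)) := by
  obtain ⟨hli, rfl, hanti⟩ := hbasis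
  set F := IntermediateField.adjoin K (sfil e (δ + 2) : Set (RatFunc K))
  have hgrow : ∀ i, δ + 2 ≤ i → i ≤ n →
      sfil e i ≤ Subalgebra.toSubmodule F.toSubalgebra := by
    intro i hi
    induction i, hi using Nat.le_induction with
    | base => exact fun _ => IntermediateField.subset_adjoin K _
    | succ i hδi ih =>
      intro hin
      have hsub := ih (Nat.le_of_succ_le hin)
      have he : e ⟨i, hin⟩ ∈ F := by
        by_contra he
        have hjump := sub_one_le_cgenus_sfil_succ_sub hli hanti hin
          fun h => he (Subfield.closure_le.mpr hsub h)
        have := hδ.2 ⟨i, by omega, by omega, rfl⟩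
        omega
      rw [sfil_succ e hin]
      exact sup_le hsub ((Submodule.span_singleton_le_iff_mem _ _).mpr he)
  rw [Kgen_eq_adjoin, Kgen_eq_adjoin]
  congr 1
  refine le_antisymm ?_ (IntermediateField.adjoin.mono _ _ _ (sfil_le_span_range e _))
  rw [IntermediateField.adjoin_le_iff, ← sfil_eq_span_range]
  exact hgrow n hδn le_rfl

/-- If `δ` is the maximal jump of the combinatorial genii along the
natural filtration and `δ + 2 ≤ n`, then `K(S) = K(S_{δ+2})`. -/
theorem statement4 (n : ℕ) (hn : 2 ≤ n) (S : Submodule K (RatFunc K))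
    (hdim : Module.finrank K ↥S = n)
    (p : Option K) (e : Fin n → RatFunc K)
    (hbasis : IsFilteredBasis (plval p) S e)
    (δ : ℕ)
    (hδ : IsGreatest
      {d : ℤ | ∃ i : ℕ, 1 ≤ i ∧ i ≤ n - 1 ∧
        d = cgenus (sfil e (i + 1)) - cgenus (sfil e i)} (δ : ℤ))
    (hδn : δ + 2 ≤ n) :
    Kgen (S : Set (RatFunc K)) = Kgen ((sfil e (δ + 2) : Submodule K (RatFunc K)) : Set (RatFunc K)) :=
  statement4_general n S p e hbasis δ hδ hδn

end FFF
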